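/- With d^{l,m} defined as in Lemma 6.4 of the paper for a dominant pair (ν₁, ν₃) with ν₁ ≥ |ν₃| (explicitly, d^{l,m} = (1/2)[(ν₁−ν₃−l)l + (ν₁+ν₃−m)m + ν₁ − |ν₃| − |ν₁−l−m| + |ν₃+l−m| + Σ_{i=1}^{l}(|ν₁−i+1| − |ν₃+l−i+1|) + Σ_{j=1}^{m}(|ν₁−j+1| − |ν₃−j|)]), for all 0 ≤ l ≤ ν₁ − ν₃ and 0 ≤ m ≤ ν₁ + ν₃ with l + m ≤ ν₁ one has the symmetry d^{l,m} = d^{ν₁−ν₃−l, ν₁+ν₃−m}. -/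
import Mathlib


noncomputable section

/-- The quantity `d^{l,m} = deg(Y^{(l,m)}v_ν)` of Lemma 6.4 of the paper, for
`ν = (ν₁, ν₃)`. -/
def dlm (ν₁ ν₃ l m : ℤ) : ℚ :=
  (1 / 2 : ℚ) *
    (((ν₁ - ν₃ - l) * l + (ν₁ + ν₃ - m) * m + ν₁ - |ν₃| - |ν₁ - l - m| + |ν₃ + l - m|
      + ∑ i ∈ Finset.Icc 1 l, (|ν₁ - i + 1| - |ν₃ + l - i + 1|)
      + ∑ j ∈ Finset.Icc 1 m, (|ν₁ - j + 1| - |ν₃ - j|) : ℤ) : ℚ)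

/-- Auxiliary "double triangular number" function: `2 * ∑_{k=1}^{x} |k|`, extended
to negative arguments so that `TT (x+1) - TT x = 2 * |x+1|` for all `x`. -/
def TT (x : ℤ) : ℤ := if 0 ≤ x then x * (x + 1) else -(x * (x + 1))

lemma TT_step (x : ℤ) : TT (x + 1) - TT x = 2 * |x + 1| := by
  unfold TT
  rcases le_or_gt 0 x with hx | hx
  · rw [if_pos (by linarith), if_pos hx, abs_of_nonneg (by linarith)]
    ring
  · rcases eq_or_lt_of_le (by linarith : x + 1 ≤ 0) with h | h
    · rw [if_pos (le_of_eq h.symm), if_neg (not_le.mpr hx), h, abs_zero]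
      nlinarith [h]
    · rw [if_neg (not_le.mpr h), if_neg (not_le.mpr hx), abs_of_neg h]
      ring

lemma TT_odd (x : ℤ) : TT (-1 - x) = - TT x := by
  unfold TT
  rcases le_or_gt 0 x with hx | hx
  · rcases eq_or_lt_of_le hx with h | h
    · rw [if_pos hx, ← h]; norm_num
    · rw [if_neg (by omega), if_pos hx]; ring
  · rw [if_pos (by omega), if_neg (not_le.mpr hx)]; ring

lemma sum_abs_eq (a : ℤ) (n : ℤ) (hn : 0 ≤ n) :
    2 * ∑ i ∈ Finset.Icc 1 n, |a - i + 1| = TT a - TT (a - n) := by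
  obtain ⟨k, rfl⟩ := Int.eq_ofNat_of_zero_le hn
  induction k with
  | zero => simp
  | succ k ih =>
    have hc : ((k + 1 : ℕ) : ℤ) = (k : ℤ) + 1 := by push_cast; ring
    specialize ih (Int.ofNat_nonneg k)
    have hins : Finset.Icc (1:ℤ) ((k:ℤ) + 1) = insert ((k:ℤ)+1) (Finset.Icc 1 (k:ℤ)) := by
      ext x; simp only [Finset.mem_Icc, Finset.mem_insert]; omega
    rw [hc, hins, Finset.sum_insert (by simp [Finset.mem_Icc]), add_comm]
    have h := TT_step (a - k - 1)
    rw [show a - (k:ℤ) - 1 + 1 = a - k by ring] at h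
    have habs : |a - ((k:ℤ) + 1) + 1| = |a - k| := by ring_nf
    rw [mul_add, ih, habs, show a - ((k:ℤ) + 1) = a - (k:ℤ) - 1 by ring]
    linarith

theorem statement13 (ν₁ ν₃ l m : ℤ) (hdom : |ν₃| ≤ ν₁)
    (hl0 : 0 ≤ l) (hl1 : l ≤ ν₁ - ν₃) (hm0 : 0 ≤ m) (hm1 : m ≤ ν₁ + ν₃)
    (hlm : l + m ≤ ν₁) :
    dlm ν₁ ν₃ l m = dlm ν₁ ν₃ (ν₁ - ν₃ - l) (ν₁ + ν₃ - m) := by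
  unfold dlm
  congr 1
  norm_cast
  have hl'0 : (0:ℤ) ≤ ν₁ - ν₃ - l := by omega
  have hm'0 : (0:ℤ) ≤ ν₁ + ν₃ - m := by omega
  -- sums, unprimed
  have s1 : 2 * ∑ i ∈ Finset.Icc 1 l, |ν₁ - i + 1| = TT ν₁ - TT (ν₁ - l) :=
    sum_abs_eq ν₁ l hl0
  have s2 : 2 * ∑ i ∈ Finset.Icc 1 l, |ν₃ + l - i + 1| = TT (ν₃ + l) - TT ν₃ := by
    have h := sum_abs_eq (ν₃ + l) l hl0
    rw [h, show ν₃ + l - l = ν₃ by ring]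
  have s3 : 2 * ∑ j ∈ Finset.Icc 1 m, |ν₁ - j + 1| = TT ν₁ - TT (ν₁ - m) :=
    sum_abs_eq ν₁ m hm0
  have s4 : 2 * ∑ j ∈ Finset.Icc 1 m, |ν₃ - j| = TT (ν₃ - 1) + TT (m - ν₃) := by
    have h := sum_abs_eq (ν₃ - 1) m hm0
    have h2 : ∀ j ∈ Finset.Icc (1:ℤ) m, |ν₃ - j| = |ν₃ - 1 - j + 1| := by
      intro j _; ring_nf
    rw [Finset.sum_congr rfl h2, h,
      show ν₃ - 1 - m = -1 - (m - ν₃) by ring, TT_odd]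
    ring
  -- sums, primed
  have t1 : 2 * ∑ i ∈ Finset.Icc 1 (ν₁ - ν₃ - l), |ν₁ - i + 1|
      = TT ν₁ - TT (ν₃ + l) := by
    have h := sum_abs_eq ν₁ (ν₁ - ν₃ - l) hl'0
    rw [h, show ν₁ - (ν₁ - ν₃ - l) = ν₃ + l by ring]
  have t2 : 2 * ∑ i ∈ Finset.Icc 1 (ν₁ - ν₃ - l), |ν₃ + (ν₁ - ν₃ - l) - i + 1|
      = TT (ν₁ - l) - TT ν₃ := by
    have h := sum_abs_eq (ν₃ + (ν₁ - ν₃ - l)) (ν₁ - ν₃ - l) hl'0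
    rw [h, show ν₃ + (ν₁ - ν₃ - l) - (ν₁ - ν₃ - l) = ν₃ by ring,
      show ν₃ + (ν₁ - ν₃ - l) = ν₁ - l by ring]
  have t3 : 2 * ∑ j ∈ Finset.Icc 1 (ν₁ + ν₃ - m), |ν₁ - j + 1|
      = TT ν₁ - TT (m - ν₃) := by
    have h := sum_abs_eq ν₁ (ν₁ + ν₃ - m) hm'0
    rw [h, show ν₁ - (ν₁ + ν₃ - m) = m - ν₃ by ring]
  have t4 : 2 * ∑ j ∈ Finset.Icc 1 (ν₁ + ν₃ - m), |ν₃ - j|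
      = TT (ν₃ - 1) + TT (ν₁ - m) := by
    have h := sum_abs_eq (ν₃ - 1) (ν₁ + ν₃ - m) hm'0
    have h2 : ∀ j ∈ Finset.Icc (1:ℤ) (ν₁ + ν₃ - m), |ν₃ - j| = |ν₃ - 1 - j + 1| := by
      intro j _; ring_nf
    rw [Finset.sum_congr rfl h2, h,
      show ν₃ - 1 - (ν₁ + ν₃ - m) = -1 - (ν₁ - m) by ring, TT_odd]
    ring
  -- the standalone absolute values
  have a1 : |ν₁ - (ν₁ - ν₃ - l) - (ν₁ + ν₃ - m)| = |ν₁ - l - m| := by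
    rw [show ν₁ - (ν₁ - ν₃ - l) - (ν₁ + ν₃ - m) = -(ν₁ - l - m) by ring, abs_neg]
  have a2 : |ν₃ + (ν₁ - ν₃ - l) - (ν₁ + ν₃ - m)| = |ν₃ + l - m| := by
    rw [show ν₃ + (ν₁ - ν₃ - l) - (ν₁ + ν₃ - m) = -(ν₃ + l - m) by ring, abs_neg]
  simp only [Finset.sum_sub_distrib]
  rw [a1, a2]
  linarith [s1, s2, s3, s4, t1, t2, t3, t4]

end
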